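/- Once a trap becomes full, it remains full indefinitely: every transition from a configuration in which the trap is full (saturated and occupied by at least m+1 agents) yields a configuration in which the trap is still full, even when agents may arrive at the gate state from outside. -/

import Mathlib

/-!
An interaction only changes the states of its two agents. If neither is in the trap, the trap is
untouched. If they hold distinct states, one of them in the trap, nothing happens. An inner rule
`i + i → i + (i - 1)` keeps both agents in the trap and leaves one of them in `i`, so no gap opens
and no agent leaves. The gate rule `0 + 0 → m + Y` takes two agents out of state `0`, which is not
an inner state, so the `m` agents occupying the inner states stay put; together with the initiator,
now in state `m`, they are `m + 1` agents in the trap.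
-/

open Classical Finset

/-- An ordered pair of distinct agents (initiator, responder) chosen by the scheduler. -/
abbrev SchedPair (n : ℕ) : Type := {p : Fin n × Fin n // p.1 ≠ p.2}

/-- One interaction step: the scheduler selects the ordered pair `p` of distinct agents
(initiator `p.1.1`, responder `p.1.2`) and they update their states via the
transition function `δ`. -/
def pstep {S : Type} {n : ℕ} (δ : S → S → S × S) (c : Fin n → S) (p : SchedPair n) :
    Fin n → S := fun a =>
  if a = p.1.1 then (δ (c p.1.1) (c p.1.2)).1
  else if a = p.1.2 then (δ (c p.1.1) (c p.1.2)).2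
  else c a

/-- The configuration after the first `t` interactions of the finite schedule `σ`. -/
def configAt {S : Type} {n T : ℕ} (δ : S → S → S × S) (c0 : Fin n → S)
    (σ : Fin T → SchedPair n) (t : ℕ) : Fin n → S :=
  ((List.ofFn σ).take t).foldl (pstep δ) c0

/-- Probability of the event `E` under the uniform random scheduler running for
`T` interactions (interactions are drawn independently and uniformly at random). -/
noncomputable def schedPr {n : ℕ} (T : ℕ) (E : (Fin T → SchedPair n) → Prop) : ℝ :=
  (((Finset.univ : Finset (Fin T → SchedPair n)).filter fun σ => E σ).card : ℝ) /
    ((Finset.univ : Finset (Fin T → SchedPair n)).card : ℝ)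

/-- The infinite trajectory generated by the schedule `σ` from configuration `c0`. -/
def ptraj {S : Type} {n : ℕ} (δ : S → S → S × S) (c0 : Fin n → S)
    (σ : ℕ → SchedPair n) : ℕ → Fin n → S
  | 0 => c0
  | t + 1 => pstep δ (ptraj δ c0 σ t) (σ t)

section Step

variable {S : Type} {N : ℕ} (δ : S → S → S × S) (c : Fin N → S) (p : SchedPair N)

theorem pstep_apply_fst : pstep δ c p p.1.1 = (δ (c p.1.1) (c p.1.2)).1 := by
  simp [pstep]

theorem pstep_apply_snd : pstep δ c p p.1.2 = (δ (c p.1.1) (c p.1.2)).2 := by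
  simp [pstep, p.2.symm]

theorem pstep_apply_of_ne {a : Fin N} (h1 : a ≠ p.1.1) (h2 : a ≠ p.1.2) :
    pstep δ c p a = c a := by
  simp [pstep, h1, h2]

theorem pstep_apply_of_state_ne {a : Fin N} (h1 : c a ≠ c p.1.1) (h2 : c a ≠ c p.1.2) :
    pstep δ c p a = c a :=
  pstep_apply_of_ne δ c p (fun h => h1 (h ▸ rfl)) (fun h => h2 (h ▸ rfl))

theorem pstep_eq_self (h : δ (c p.1.1) (c p.1.2) = (c p.1.1, c p.1.2)) : pstep δ c p = c := by
  funext a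
  by_cases h1 : a = p.1.1
  · rw [h1, pstep_apply_fst, h]
  by_cases h2 : a = p.1.2
  · rw [h2, pstep_apply_snd, h]
  exact pstep_apply_of_ne δ c p h1 h2

end Step

section Trap

variable {S : Type} {m N : ℕ} (trap : Fin (m + 1) ↪ S)

def IsSaturated (c : Fin N → S) : Prop :=
  ∀ i : Fin (m + 1), i ≠ 0 → ∃ a, c a = trap i

noncomputable def trapCount (c : Fin N → S) : ℕ :=
  #(univ.filter fun a => ∃ i, c a = trap i)

def IsFull (c : Fin N → S) : Prop :=
  IsSaturated trap c ∧ m + 1 ≤ trapCount trap c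

variable {trap} {δ : S → S → S × S} {c : Fin N → S}

theorem trapCount_le_trapCount_pstep (p : SchedPair N)
    (h1 : (∃ i, c p.1.1 = trap i) → ∃ i, pstep δ c p p.1.1 = trap i)
    (h2 : (∃ i, c p.1.2 = trap i) → ∃ i, pstep δ c p p.1.2 = trap i) :
    trapCount trap c ≤ trapCount trap (pstep δ c p) := by
  refine card_le_card fun a ha => ?_
  simp only [mem_filter, mem_univ, true_and] at ha ⊢
  by_cases ha1 : a = p.1.1
  · rw [ha1] at ha ⊢
    exact h1 ha
  by_cases ha2 : a = p.1.2
  · rw [ha2] at ha ⊢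
    exact h2 ha
  rwa [pstep_apply_of_ne δ c p ha1 ha2]

theorem isSaturated_pstep (hsat : IsSaturated trap c) (p : SchedPair N)
    (hheld : ∀ i, i ≠ 0 → (trap i = c p.1.1 ∨ trap i = c p.1.2) →
      ∃ a, pstep δ c p a = trap i) :
    IsSaturated trap (pstep δ c p) := by
  intro i hi
  by_cases h : trap i = c p.1.1 ∨ trap i = c p.1.2
  · exact hheld i hi h
  push Not at h
  obtain ⟨a, ha⟩ := hsat i hi
  exact ⟨a, by rw [pstep_apply_of_state_ne δ c p (ha ▸ h.1) (ha ▸ h.2), ha]⟩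

theorem succ_le_trapCount (d : Fin N → S) (b : Fin N) (hb : ∃ i, d b = trap i)
    (hsat : ∀ i, i ≠ 0 → ∃ a, a ≠ b ∧ d a = trap i) :
    m + 1 ≤ trapCount trap d := by
  set T := univ.filter fun a => a ≠ b ∧ ∃ i, d a = trap i
  have hT : m ≤ #T := by
    calc m = #((univ.erase 0).map trap) := by simp
      _ ≤ #T := card_le_card_of_surjOn d fun s hs => by
        obtain ⟨i, hi, rfl⟩ := mem_map.1 hs
        obtain ⟨a, hab, ha⟩ := hsat i (ne_of_mem_erase hi)
        exact ⟨a, by simp [T, hab, ha], ha⟩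
  have hbT : b ∉ T := by simp [T]
  have hsub : insert b T ⊆ univ.filter fun a => ∃ i, d a = trap i := by
    intro a ha
    rcases mem_insert.1 ha with rfl | ha
    · simpa using hb
    · simpa using (mem_filter.1 ha).2.2
  calc m + 1 ≤ #(insert b T) := by rw [card_insert_of_notMem hbT]; omega
    _ ≤ trapCount trap d := card_le_card hsub

theorem isFull_pstep_of_outside (hfull : IsFull trap c) (p : SchedPair N)
    (h1 : ∀ i, c p.1.1 ≠ trap i) (h2 : ∀ i, c p.1.2 ≠ trap i) :
    IsFull trap (pstep δ c p) := by
  refine ⟨isSaturated_pstep hfull.1 p fun i _ hi => ?_, ?_⟩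
  · exact hi.elim (fun h => (h1 i h.symm).elim) (fun h => (h2 i h.symm).elim)
  · exact hfull.2.trans (trapCount_le_trapCount_pstep p
      (fun ⟨i, h⟩ => (h1 i h).elim) (fun ⟨i, h⟩ => (h2 i h).elim))

theorem isFull_pstep_of_inner {i : Fin (m + 1)}
    (hinner : δ (trap i) (trap i) = (trap i, trap (i - 1))) (hfull : IsFull trap c)
    (p : SchedPair N) (h1 : c p.1.1 = trap i) (h2 : c p.1.2 = trap i) :
    IsFull trap (pstep δ c p) := by
  have hfst : pstep δ c p p.1.1 = trap i := by rw [pstep_apply_fst, h1, h2, hinner]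
  have hsnd : pstep δ c p p.1.2 = trap (i - 1) := by rw [pstep_apply_snd, h1, h2, hinner]
  refine ⟨isSaturated_pstep hfull.1 p fun j _ hj => ⟨p.1.1, ?_⟩, ?_⟩
  · rw [hfst]
    rcases hj with hj | hj
    exacts [(hj.trans h1).symm, (hj.trans h2).symm]
  · exact hfull.2.trans (trapCount_le_trapCount_pstep p
      (fun _ => ⟨i, hfst⟩) (fun _ => ⟨i - 1, hsnd⟩))

theorem isFull_pstep_of_gate {Y : S} (hgate : δ (trap 0) (trap 0) = (trap (Fin.last m), Y))
    (hsat : IsSaturated trap c) (p : SchedPair N) (h1 : c p.1.1 = trap 0)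
    (h2 : c p.1.2 = trap 0) :
    IsFull trap (pstep δ c p) := by
  have hstay : ∀ i, i ≠ 0 → ∃ a, a ≠ p.1.1 ∧ pstep δ c p a = trap i := by
    intro i hi
    obtain ⟨a, ha⟩ := hsat i hi
    have hne : c a ≠ trap 0 := ha ▸ (trap.injective.ne hi)
    refine ⟨a, fun h => hne (h ▸ h1), ?_⟩
    rw [pstep_apply_of_state_ne δ c p (h1 ▸ hne) (h2 ▸ hne), ha]
  refine ⟨fun i hi => (hstay i hi).imp fun _ => And.right, ?_⟩
  exact succ_le_trapCount _ p.1.1 ⟨Fin.last m, by rw [pstep_apply_fst, h1, h2, hgate]⟩ hstay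

end Trap

theorem trap_full_stays_full_general
    {S : Type} {m N : ℕ} (trap : Fin (m + 1) ↪ S) (Y : S) (δ : S → S → S × S)
    (hinner : ∀ i : Fin (m + 1), i ≠ 0 → δ (trap i) (trap i) = (trap i, trap (i - 1)))
    (hgate : δ (trap 0) (trap 0) = (trap (Fin.last m), Y))
    (honly : ∀ s t : S, s ≠ t → ((∃ i, s = trap i) ∨ (∃ i, t = trap i)) → δ s t = (s, t))
    (c : Fin N → S) (p : SchedPair N)
    (hsat : ∀ i : Fin (m + 1), i ≠ 0 → ∃ a, c a = trap i)
    (hcount : m + 1 ≤ ((Finset.univ : Finset (Fin N)).filter fun a => ∃ i, c a = trap i).card) :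
    (∀ i : Fin (m + 1), i ≠ 0 → ∃ a, pstep δ c p a = trap i) ∧
      m + 1 ≤ ((Finset.univ : Finset (Fin N)).filter fun a => ∃ i, pstep δ c p a = trap i).card := by
  change IsFull trap (pstep δ c p)
  have hfull : IsFull trap c := ⟨hsat, hcount⟩
  by_cases hin : (∃ i, c p.1.1 = trap i) ∨ ∃ i, c p.1.2 = trap i
  · by_cases hst : c p.1.1 = c p.1.2
    · obtain ⟨i, hi1⟩ : ∃ i, c p.1.1 = trap i := hin.elim id (hst ▸ ·)
      have hi2 : c p.1.2 = trap i := hst ▸ hi1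
      rcases eq_or_ne i 0 with rfl | hi
      · exact isFull_pstep_of_gate hgate hsat p hi1 hi2
      · exact isFull_pstep_of_inner (hinner i hi) hfull p hi1 hi2
    · rwa [pstep_eq_self δ c p (honly _ _ hst hin)]
  · push Not at hin
    exact isFull_pstep_of_outside hfull p hin.1 hin.2

/-- Once a trap becomes full (saturated, i.e. every inner state is
occupied, and at least `m+1` agents occupy the trap's states), it remains full
after every single transition, even when other rules may send agents into the
trap's gate state from outside. -/
theorem trap_full_stays_full
    {S : Type} {m N : ℕ} (trap : Fin (m + 1) ↪ S) (Y : S) (δ : S → S → S × S)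
    (hY : ∀ i, Y ≠ trap i)
    (hinner : ∀ i : Fin (m + 1), i ≠ 0 → δ (trap i) (trap i) = (trap i, trap (i - 1)))
    (hgate : δ (trap 0) (trap 0) = (trap (Fin.last m), Y))
    (honly : ∀ s t : S, s ≠ t → ((∃ i, s = trap i) ∨ (∃ i, t = trap i)) → δ s t = (s, t))
    (c : Fin N → S) (p : SchedPair N)
    (hsat : ∀ i : Fin (m + 1), i ≠ 0 → ∃ a, c a = trap i)
    (hcount : m + 1 ≤ ((Finset.univ : Finset (Fin N)).filter fun a => ∃ i, c a = trap i).card) :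
    (∀ i : Fin (m + 1), i ≠ 0 → ∃ a, pstep δ c p a = trap i) ∧
      m + 1 ≤ ((Finset.univ : Finset (Fin N)).filter fun a => ∃ i, pstep δ c p a = trap i).card :=
  trap_full_stays_full_general trap Y δ hinner hgate honly c p hsat hcount
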